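/- arXiv:1103.1729 — 3 statements merged into one kernel-verified Lean document; each statement's English description precedes it below -/
import Mathlib

section
/- Let (Y,Z) be jointly normal with correlation ρ < 0, R = e^Y - 1, X = e^Z. If E[R] > 0, then E[R · 1_{X ≤ c}] > 0 for all c > 0 (equivalently E[R | X ≤ c] > 0). -/
/-!
Write `Y = μY + σY W₁` and `Z = μZ + σZ (ρ W₁ + √(1 - ρ²) W₂)` with `W₁, W₂` independent standard
normals. Since `ρ < 0`, for a fixed value `y` of `W₂` the event `e^Z ≤ c` is an upper half-line
`W₁ ≥ a(y)`. The function `f x = e^(μY + σY x) - 1` is increasing with positive Gaussian mean, and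
such a function has positive integral over every upper half-line: either `f(a) > 0` and `f` is
positive on the whole half-line, or `f ≤ 0` below `a` and removing that part only increases the
integral. Integrating these positive slices over `y` (Fubini) gives the claim.
-/

open MeasureTheory ProbabilityTheory Set

lemma integrable_exp_affine_gaussianReal (m : ℝ) (v : NNReal) (b s : ℝ) :
    Integrable (fun x => Real.exp (b + s * x)) (gaussianReal m v) := by
  simp_rw [Real.exp_add]
  exact (integrable_exp_mul_gaussianReal s).const_mul _

lemma gaussianReal_Ici_ne_zero (m : ℝ) {v : NNReal} (hv : v ≠ 0) (a : ℝ) :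
    gaussianReal m v (Ici a) ≠ 0 := fun h => by
  simpa [Real.volume_Ici] using gaussianReal_absolutelyContinuous' m hv h

lemma setIntegral_Ici_pos_of_monotone {ν : Measure ℝ} [IsFiniteMeasure ν] {f : ℝ → ℝ}
    (hf : Monotone f) (hfi : Integrable f ν) (hν : ∀ a, ν (Ici a) ≠ 0)
    (hpos : 0 < ∫ x, f x ∂ν) (a : ℝ) : 0 < ∫ x in Ici a, f x ∂ν := by
  rcases le_or_gt (f a) 0 with hfa | hfa
  · have hIio : ∫ x in Iio a, f x ∂ν ≤ 0 :=
      setIntegral_nonpos measurableSet_Iio fun x hx => (hf (le_of_lt hx)).trans hfa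
    have hsplit := integral_add_compl (measurableSet_Iio (a := a)) hfi
    rw [compl_Iio] at hsplit
    linarith
  · calc 0 < f a * ν.real (Ici a) :=
          mul_pos hfa (ENNReal.toReal_pos (hν a) (measure_ne_top _ _))
      _ ≤ ∫ x in Ici a, f x ∂ν :=
          setIntegral_ge_of_const_le_real measurableSet_Ici (measure_ne_top _ _)
            (fun _ hx => hf hx) hfi.integrableOn

lemma integral_pos_of_forall_pos {α : Type*} [MeasurableSpace α] {μ : Measure α} [NeZero μ]
    {f : α → ℝ} (hf : ∀ x, 0 < f x) (hfi : Integrable f μ) : 0 < ∫ x, f x ∂μ := by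
  rw [integral_pos_iff_support_of_nonneg (fun x => (hf x).le) hfi,
    Function.support_eq_univ fun x => (hf x).ne']
  exact Measure.measure_univ_pos.mpr (NeZero.ne μ)

lemma integral_prod_pos_of_forall_integral_pos {α β : Type*} [MeasurableSpace α]
    [MeasurableSpace β] {μ : Measure α} {ν : Measure β} [SFinite μ] [SFinite ν] [NeZero ν]
    {F : α × β → ℝ} (hF : Integrable F (μ.prod ν)) (hslice : ∀ y, 0 < ∫ x, F (x, y) ∂μ) :
    0 < ∫ p, F p ∂(μ.prod ν) := by
  rw [integral_prod_symm F hF]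
  exact integral_pos_of_forall_pos hslice hF.integral_prod_right

lemma add_mul_le_iff_of_neg {m σ ρ s t x y : ℝ} (hσ : 0 < σ) (hρ : ρ < 0) :
    m + σ * (ρ * x + s * y) ≤ t ↔ ((t - m) / σ - s * y) / ρ ≤ x := by
  rw [div_le_iff_of_neg hρ, le_sub_iff_add_le, le_div_iff₀ hσ]
  constructor <;> intro h <;> nlinarith

theorem stmt9_general {Ω : Type*} [MeasurableSpace Ω] (μ : Measure Ω) [IsProbabilityMeasure μ]
    (W₁ W₂ : Ω → ℝ) (hW₁ : Measurable W₁) (hW₂ : Measurable W₂)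
    (hlaw1 : μ.map W₁ = gaussianReal 0 1) (hlaw2 : μ.map W₂ = gaussianReal 0 1)
    (hindep : IndepFun W₁ W₂ μ)
    (μY μZ σY σZ ρ : ℝ) (hσY : 0 < σY) (hσZ : 0 < σZ) (hρ₂ : ρ < 0)
    (Y Z : Ω → ℝ)
    (hY : Y = fun ω => μY + σY * W₁ ω)
    (hZ : Z = fun ω => μZ + σZ * (ρ * W₁ ω + Real.sqrt (1 - ρ ^ 2) * W₂ ω))
    (hER : 0 < ∫ ω, (Real.exp (Y ω) - 1) ∂μ) :
    ∀ c : ℝ, 0 < c → 0 < ∫ ω in {ω | Real.exp (Z ω) ≤ c}, (Real.exp (Y ω) - 1) ∂μ := by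
  intro c hc
  subst hY hZ
  set G := gaussianReal 0 1
  set f : ℝ → ℝ := fun x => Real.exp (μY + σY * x) - 1
  set a : ℝ → ℝ := fun y => ((Real.log c - μZ) / σZ - √(1 - ρ ^ 2) * y) / ρ
  set S : Set (ℝ × ℝ) := {p | a p.2 ≤ p.1}
  have hS : MeasurableSet S := measurableSet_le (by fun_prop) measurable_fst
  have hf_mono : Monotone f := fun x y hxy => by simp only [f]; gcongr
  have hfi : Integrable f G :=
    (integrable_exp_affine_gaussianReal 0 1 μY σY).sub (integrable_const 1)
  have hEf : 0 < ∫ x, f x ∂G := by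
    rwa [← hlaw1, integral_map hW₁.aemeasurable (by fun_prop)]
  have hlaw : μ.map (fun ω => (W₁ ω, W₂ ω)) = G.prod G := by
    rw [(indepFun_iff_map_prod_eq_prod_map_map hW₁.aemeasurable hW₂.aemeasurable).mp hindep,
      hlaw1, hlaw2]
  have hevent : {ω | Real.exp (μZ + σZ * (ρ * W₁ ω + √(1 - ρ ^ 2) * W₂ ω)) ≤ c}
      = (fun ω => (W₁ ω, W₂ ω)) ⁻¹' S := by
    ext ω
    simp only [mem_preimage, S, a, ← Real.le_log_iff_exp_le hc]
    exact add_mul_le_iff_of_neg hσZ hρ₂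
  have hpushforward : ∫ ω in (fun ω => (W₁ ω, W₂ ω)) ⁻¹' S, (Real.exp (μY + σY * W₁ ω) - 1) ∂μ
      = ∫ p, S.indicator (fun p => f p.1) p ∂(G.prod G) := by
    rw [← integral_indicator (hS.preimage (hW₁.prodMk hW₂)), ← hlaw,
      integral_map (hW₁.prodMk hW₂).aemeasurable
        (Measurable.indicator (by fun_prop) hS).aestronglyMeasurable]
    rfl
  rw [hevent, hpushforward]
  refine integral_prod_pos_of_forall_integral_pos ((hfi.comp_fst G).indicator hS) fun y => ?_
  rw [show (fun x => S.indicator (fun p => f p.1) (x, y)) = (Ici (a y)).indicator f from rfl,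
    integral_indicator measurableSet_Ici]
  exact setIntegral_Ici_pos_of_monotone hf_mono hfi (gaussianReal_Ici_ne_zero 0 one_ne_zero) hEf _

/-- `(Y,Z)` is bivariate normal with means `μY, μZ`, standard deviations `σY, σZ` and
correlation `ρ < 0`, realized via independent standard normals `W₁, W₂`. If
`R = e^Y - 1` has positive mean, then `E[R · 1_{X ≤ c}] > 0` for all `c > 0`,
where `X = e^Z`. -/
theorem stmt9 {Ω : Type*} [MeasurableSpace Ω] (μ : Measure Ω) [IsProbabilityMeasure μ]
    (W₁ W₂ : Ω → ℝ) (hW₁ : Measurable W₁) (hW₂ : Measurable W₂)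
    (hlaw1 : μ.map W₁ = gaussianReal 0 1) (hlaw2 : μ.map W₂ = gaussianReal 0 1)
    (hindep : IndepFun W₁ W₂ μ)
    (μY μZ σY σZ ρ : ℝ) (hσY : 0 < σY) (hσZ : 0 < σZ) (hρ₁ : -1 < ρ) (hρ₂ : ρ < 0)
    (Y Z : Ω → ℝ)
    (hY : Y = fun ω => μY + σY * W₁ ω)
    (hZ : Z = fun ω => μZ + σZ * (ρ * W₁ ω + Real.sqrt (1 - ρ ^ 2) * W₂ ω))
    (hER : 0 < ∫ ω, (Real.exp (Y ω) - 1) ∂μ) :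
    ∀ c : ℝ, 0 < c → 0 < ∫ ω in {ω | Real.exp (Z ω) ≤ c}, (Real.exp (Y ω) - 1) ∂μ :=
  stmt9_general μ W₁ W₂ hW₁ hW₂ hlaw1 hlaw2 hindep μY μZ σY σZ ρ hσY hσZ hρ₂ Y Z hY hZ hER
end

section
/- Let ρ be a convex, cash-invariant risk measure and V_R(v,w) = -w + ρ(-vR + X). Then the function v_ρ(w) = sup{v ∈ [0,w] : V_R(v,w) ≤ 0} is concave on its effective domain 𝒟 = {w > 0 : v_ρ(w) > -∞}, and hence continuous on the interior of 𝒟. -/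
/-!
Write `V (w, v) = -w + ρ (-v R + X)`. Convexity of `ρ` makes `V` jointly convex, so the feasible
set `{(w, v) | 0 ≤ v ≤ w, V (w, v) ≤ 0}` is convex. The value `v_ρ w` is the supremum of the
fibre of this set over `w`, and a supremum over the fibres of a convex set is concave: the
Minkowski combination `a • S x + b • S y` of two fibres lies in the fibre over `a x + b y`.
-/

open Set Pointwise

theorem convexOn_univ_of_forall_mix_le {E : Type*} [AddCommGroup E] [Module ℝ E] {f : E → ℝ}
    (hf : ∀ x y (t : ℝ), t ∈ Icc (0 : ℝ) 1 → f (t • x + (1 - t) • y) ≤ t * f x + (1 - t) * f y) :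
    ConvexOn ℝ univ f := by
  refine ⟨convex_univ, fun x _ y _ a b ha hb hab => ?_⟩
  obtain rfl : b = 1 - a := by linarith
  exact hf x y a ⟨ha, by linarith⟩

theorem ConvexOn.neg_fst_add_comp_affine {Ω : Type*} {ρ : (Ω → ℝ) → ℝ} (hρ : ConvexOn ℝ univ ρ)
    (X R : Ω → ℝ) :
    ConvexOn ℝ univ fun p : ℝ × ℝ => -p.1 + ρ (fun ω => -(p.2 * R ω) + X ω) := by
  let g : ℝ × ℝ →ᵃ[ℝ] (Ω → ℝ) :=
    ((LinearMap.smulRight (LinearMap.snd ℝ ℝ ℝ) (-R)).toAffineMap + AffineMap.const ℝ _ X)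
  have h1 : ConvexOn ℝ univ fun p : ℝ × ℝ => -p.1 := (-LinearMap.fst ℝ ℝ ℝ).convexOn convex_univ
  have h2 : ConvexOn ℝ univ (ρ ∘ g) := by simpa using hρ.comp_affineMap g
  refine (h1.add h2).congr fun p _ => ?_
  change -p.1 + ρ (g p) = _
  congr 2 with ω
  simp [g]

theorem ConvexOn.convex_setOf_nonneg_le_fst_and_nonpos {V : ℝ × ℝ → ℝ}
    (hV : ConvexOn ℝ univ V) :
    Convex ℝ {p : ℝ × ℝ | 0 ≤ p.2 ∧ p.2 ≤ p.1 ∧ V p ≤ 0} := by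
  rintro ⟨x, u⟩ ⟨hu, hux, hVu⟩ ⟨y, v⟩ ⟨hv, hvy, hVv⟩ a b ha hb hab
  simp only [Prod.smul_mk, Prod.mk_add_mk, smul_eq_mul, mem_ofPred_eq]
  refine ⟨by positivity, by gcongr, ?_⟩
  exact (hV.2 (mem_univ (x, u)) (mem_univ (y, v)) ha hb hab).trans
    (add_nonpos (smul_nonpos_of_nonneg_of_nonpos ha hVu) (smul_nonpos_of_nonneg_of_nonpos hb hVv))

theorem convex_setOf_nonempty_of_convex_graph {S : ℝ → Set ℝ}
    (hS : Convex ℝ {p : ℝ × ℝ | p.2 ∈ S p.1}) : Convex ℝ {w | (S w).Nonempty} := by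
  rintro x ⟨u, hu⟩ y ⟨v, hv⟩ a b ha hb hab
  exact ⟨_, hS (x := (x, u)) (y := (y, v)) hu hv ha hb hab⟩

theorem concaveOn_csSup_of_convex_graph {S : ℝ → Set ℝ}
    (hS : Convex ℝ {p : ℝ × ℝ | p.2 ∈ S p.1}) {s : Set ℝ} (hs : Convex ℝ s)
    (hne : ∀ w ∈ s, (S w).Nonempty) (hbdd : ∀ w ∈ s, BddAbove (S w)) :
    ConcaveOn ℝ s fun w => sSup (S w) := by
  refine ⟨hs, fun x hx y hy a b ha hb hab => ?_⟩
  have hsub : a • S x + b • S y ⊆ S (a • x + b • y) := by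
    rintro _ ⟨_, ⟨u, hu, rfl⟩, _, ⟨v, hv, rfl⟩, rfl⟩
    exact hS (x := (x, u)) (y := (y, v)) hu hv ha hb hab
  calc a • sSup (S x) + b • sSup (S y)
      = sSup (a • S x + b • S y) := by
        rw [csSup_add ((hne x hx).smul_set) ((hbdd x hx).smul_of_nonneg ha)
          ((hne y hy).smul_set) ((hbdd y hy).smul_of_nonneg hb),
          Real.sSup_smul_of_nonneg ha, Real.sSup_smul_of_nonneg hb]
    _ ≤ sSup (S (a • x + b • y)) :=
        csSup_le_csSup (hbdd _ (hs hx hy ha hb hab))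
          ((hne x hx).smul_set.add (hne y hy).smul_set) hsub

theorem stmt13_general {Ω : Type*} (ρ : (Ω → ℝ) → ℝ)
    (hconv : ∀ (L L' : Ω → ℝ) (t : ℝ), t ∈ Set.Icc (0:ℝ) 1 →
      ρ (fun ω => t * L ω + (1 - t) * L' ω) ≤ t * ρ L + (1 - t) * ρ L')
    (X R : Ω → ℝ)
    (vρ : ℝ → ℝ)
    (hvρ : vρ = fun w =>
      sSup {v : ℝ | 0 ≤ v ∧ v ≤ w ∧ -w + ρ (fun ω => -(v * R ω) + X ω) ≤ 0})
    (D : Set ℝ)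
    (hD : D = {w : ℝ | 0 < w ∧
      {v : ℝ | 0 ≤ v ∧ v ≤ w ∧ -w + ρ (fun ω => -(v * R ω) + X ω) ≤ 0}.Nonempty}) :
    ConcaveOn ℝ D vρ ∧ ContinuousOn vρ (interior D) := by
  subst hvρ hD
  set S : ℝ → Set ℝ := fun w => {v | 0 ≤ v ∧ v ≤ w ∧ -w + ρ (fun ω => -(v * R ω) + X ω) ≤ 0}
  have hV := (convexOn_univ_of_forall_mix_le hconv).neg_fst_add_comp_affine X R
  have hgraph : Convex ℝ {p : ℝ × ℝ | p.2 ∈ S p.1} := hV.convex_setOf_nonneg_le_fst_and_nonpos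
  have hdom : Convex ℝ {w | 0 < w ∧ (S w).Nonempty} :=
    (convex_Ioi 0).inter (convex_setOf_nonempty_of_convex_graph hgraph)
  have hconc : ConcaveOn ℝ {w | 0 < w ∧ (S w).Nonempty} fun w => sSup (S w) :=
    concaveOn_csSup_of_convex_graph hgraph hdom (fun w hw => hw.2)
      fun w _ => ⟨w, fun v hv => hv.2.1⟩
  exact ⟨hconc, hconc.continuousOn_interior⟩

theorem stmt13 {Ω : Type*} (ρ : (Ω → ℝ) → ℝ)
    (hcash : ∀ (L : Ω → ℝ) (c : ℝ), ρ (fun ω => L ω + c) = ρ L + c)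
    (hconv : ∀ (L L' : Ω → ℝ) (t : ℝ), t ∈ Set.Icc (0:ℝ) 1 →
      ρ (fun ω => t * L ω + (1 - t) * L' ω) ≤ t * ρ L + (1 - t) * ρ L')
    (X R : Ω → ℝ)
    (vρ : ℝ → ℝ)
    (hvρ : vρ = fun w =>
      sSup {v : ℝ | 0 ≤ v ∧ v ≤ w ∧ -w + ρ (fun ω => -(v * R ω) + X ω) ≤ 0})
    (D : Set ℝ)
    (hD : D = {w : ℝ | 0 < w ∧
      {v : ℝ | 0 ≤ v ∧ v ≤ w ∧ -w + ρ (fun ω => -(v * R ω) + X ω) ≤ 0}.Nonempty}) :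
    ConcaveOn ℝ D vρ ∧ ContinuousOn vρ (interior D) :=
  stmt13_general ρ hconv X R vρ hvρ D hD
end

section
/- Let φ : ℝ² → ℝ be a function that is strictly concave along every straight line {(a + bw, w) : w ∈ I} contained in its convex domain, strictly decreasing in the second coordinate, and let v_ρ be concave and nondecreasing. Then w ↦ φ(v_ρ(w), w) is strictly quasiconcave on the domain of v_ρ. -/
/-!
Fix `w₁ < w₂ < w₃` and write `vᵢ = v_ρ(wᵢ)`. If `v₂ = v₃`, then `(v₂, w₂)` and `(v₃, w₃)` differ
only in the second coordinate, and `φ` is strictly decreasing there. Otherwise concavity of `v_ρ`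
gives a point `(v₂, w')` with `w' ≥ w₂` on the open chord from `(v₁, w₁)` to `(v₃, w₃)`.
That chord lies on a line `v = a + b w`, so strict concavity of `φ` along it gives
`φ(v₂, w') > min(φ(v₁, w₁), φ(v₃, w₃))`, and `φ(v₂, w₂) ≥ φ(v₂, w')` because `w₂ ≤ w'`.
-/

/-- The domain `𝒱 = {(v,w) : 0 < v ≤ w}`. -/
def Vset : Set (ℝ × ℝ) := {q | 0 < q.1 ∧ q.1 ≤ q.2}

lemma mem_Vset_of_le {v w w' : ℝ} (h : (v, w) ∈ Vset) (hw : w ≤ w') : (v, w') ∈ Vset :=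
  ⟨h.1, h.2.trans hw⟩

lemma min_lt_of_strictConcaveOn_lines {V : Set (ℝ × ℝ)} {φ : ℝ × ℝ → ℝ}
    (hline : ∀ a b : ℝ,
      StrictConcaveOn ℝ {w : ℝ | (a + b * w, w) ∈ V} (fun w => φ (a + b * w, w)))
    {p q : ℝ × ℝ} (hp : p ∈ V) (hq : q ∈ V) (hpq : p.2 ≠ q.2)
    {s t : ℝ} (hs : 0 < s) (ht : 0 < t) (hst : s + t = 1) :
    min (φ p) (φ q) < φ (s • p + t • q) := by
  obtain ⟨v₁, w₁⟩ := p
  obtain ⟨v₃, w₃⟩ := q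
  have hw : w₃ - w₁ ≠ 0 := sub_ne_zero.2 (Ne.symm hpq)
  set b := (v₃ - v₁) / (w₃ - w₁)
  set a := v₁ - b * w₁
  have ha₁ : a + b * w₁ = v₁ := by ring
  have ha₃ : a + b * w₃ = v₃ := by simp only [a, b]; field_simp; ring
  have hmid : a + b * (s * w₁ + t * w₃) = s * v₁ + t * v₃ := by
    rw [← ha₁, ← ha₃]; linear_combination (-a) * hst
  have key := (hline a b).lt_on_open_segment' (x := w₁) (y := w₃)
    (by simpa [ha₁] using hp) (by simpa [ha₃] using hq) hpq hs ht hst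
  simp only [ha₁, ha₃, smul_eq_mul, hmid] at key
  simpa only [Prod.smul_mk, Prod.mk_add_mk, smul_eq_mul] using key

lemma ConcaveOn.exists_combo_eq_of_lt {D : Set ℝ} {v : ℝ → ℝ} (hconc : ConcaveOn ℝ D v)
    {x y z : ℝ} (hx : x ∈ D) (hz : z ∈ D) (hxy : x < y) (hyz : y < z) (hv : v y < v z) :
    ∃ s t : ℝ, 0 < s ∧ 0 < t ∧ s + t = 1 ∧ s * v x + t * v z = v y ∧ y ≤ s * x + t * z := by
  have hsecant := hconc.neg.secant_mono_aux1 hx hz hxy hyz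
  simp only [Pi.neg_apply] at hsecant
  have hvxy : v x < v y := by nlinarith
  have hvxz : 0 < v z - v x := by linarith
  refine ⟨(v z - v y) / (v z - v x), (v y - v x) / (v z - v x), by bound, by bound,
    by field_simp; ring, by field_simp; ring, ?_⟩
  rw [div_mul_eq_mul_div, div_mul_eq_mul_div, ← add_div, le_div_iff₀ hvxz]
  nlinarith

theorem stmt17_general (φ : ℝ × ℝ → ℝ)
    (hdec : ∀ v w w' : ℝ, (v, w) ∈ Vset → (v, w') ∈ Vset → w < w' → φ (v, w') < φ (v, w))
    (hline : ∀ a b : ℝ,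
      StrictConcaveOn ℝ {w : ℝ | (a + b * w, w) ∈ Vset} (fun w => φ (a + b * w, w)))
    (D : Set ℝ)
    (vρ : ℝ → ℝ) (hconc : ConcaveOn ℝ D vρ) (hmono : MonotoneOn vρ D)
    (hgraph : ∀ w ∈ D, (vρ w, w) ∈ Vset) :
    ∀ w₁ ∈ D, ∀ w₂ ∈ D, ∀ w₃ ∈ D, w₁ < w₂ → w₂ < w₃ →
      min (φ (vρ w₁, w₁)) (φ (vρ w₃, w₃)) < φ (vρ w₂, w₂) := by
  intro w₁ h₁ w₂ h₂ w₃ h₃ h₁₂ h₂₃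
  rcases (hmono h₂ h₃ h₂₃.le).eq_or_lt with hv | hv
  · have hφ := hdec (vρ w₂) w₂ w₃ (hgraph w₂ h₂) (mem_Vset_of_le (hgraph w₂ h₂) h₂₃.le) h₂₃
    rw [hv] at hφ ⊢
    exact (min_le_right _ _).trans_lt hφ
  · obtain ⟨s, t, hs, ht, hst, hv₂, hw⟩ := hconc.exists_combo_eq_of_lt h₁ h₃ h₁₂ h₂₃ hv
    have hchord := min_lt_of_strictConcaveOn_lines hline (hgraph w₁ h₁) (hgraph w₃ h₃)
      (h₁₂.trans h₂₃).ne hs ht hst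
    simp only [Prod.smul_mk, Prod.mk_add_mk, smul_eq_mul, hv₂] at hchord
    refine hchord.trans_le ?_
    rcases hw.eq_or_lt with hw | hw
    · rw [← hw]
    · exact (hdec _ _ _ (hgraph w₂ h₂) (mem_Vset_of_le (hgraph w₂ h₂) hw.le) hw).le

theorem stmt17 (φ : ℝ × ℝ → ℝ)
    (hdec : ∀ v w w' : ℝ, (v, w) ∈ Vset → (v, w') ∈ Vset → w < w' → φ (v, w') < φ (v, w))
    (hline : ∀ a b : ℝ,
      StrictConcaveOn ℝ {w : ℝ | (a + b * w, w) ∈ Vset} (fun w => φ (a + b * w, w)))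
    (D : Set ℝ) (hD : Convex ℝ D)
    (vρ : ℝ → ℝ) (hconc : ConcaveOn ℝ D vρ) (hmono : MonotoneOn vρ D)
    (hgraph : ∀ w ∈ D, (vρ w, w) ∈ Vset) :
    ∀ w₁ ∈ D, ∀ w₂ ∈ D, ∀ w₃ ∈ D, w₁ < w₂ → w₂ < w₃ →
      min (φ (vρ w₁, w₁)) (φ (vρ w₃, w₃)) < φ (vρ w₂, w₂) :=
  stmt17_general φ hdec hline D vρ hconc hmono hgraph
end
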